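/- CDCL with the DECISION learning scheme and ordered decision strategy is simulated by half-ordered resolution: if a clause D is learned from a state S = (ℂ, t) in CDCL(π-D, DECISION-L), then there is a π-half-ordered resolution derivation of a subclause of D from ℂ of length O(k²), where k is the number of unit-propagation steps in t used in the learning derivation. -/

import Mathlib

abbrev Var := ℕ
abbrev Lit := Var × Bool
abbrev Clause := Finset Lit

def Clause.vars (C : Clause) : Finset Var := C.image Prod.fst

abbrev Assignment := Var → Option Bool

def litSat (σ : Assignment) (l : Lit) : Prop := σ l.1 = some l.2
def litFalse (σ : Assignment) (l : Lit) : Prop := σ l.1 = some (!l.2)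

def Clause.falsified (σ : Assignment) (C : Clause) : Prop := ∀ l ∈ C, litFalse σ l

def resolve (x : Var) (C D : Clause) : Clause :=
  C.filter (fun l => l.1 ≠ x) ∪ D.filter (fun l => l.1 ≠ x)

def resolvableOn (x : Var) (C D : Clause) : Prop :=
  (∃ a : Bool, (x, a) ∈ C ∧ (x, !a) ∈ D) ∧
    ∀ (y : Var) (b : Bool), y ≠ x → (y, b) ∈ C → (y, !b) ∉ D
abbrev TEntry := Var × Bool × Bool

abbrev Trail := List TEntry

def Trail.assign (t : Trail) : Assignment :=
  fun x => (t.find? (fun e => e.1 == x)).map (fun e => e.2.1)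

def Trail.varList (t : Trail) : List Var := t.map (fun e => e.1)

def restrictedIsUnit (σ : Assignment) (C : Clause) (l : Lit) : Prop :=
  l ∈ C ∧ σ l.1 = none ∧ ∀ m ∈ C, m ≠ l → litFalse σ m
def prefixAssign (t : Trail) (k : ℕ) : Assignment := Trail.assign (t.take k)

def stepSet (𝒞 : Set Clause) (t : Trail) (k : ℕ) (prev : Set Clause) : Set Clause :=
  match t[k - 1]? with
  | none => prev
  | some e =>
      if e.2.2 then prev
      else
        {D ∈ prev | (e.1, !e.2.1) ∉ D} ∪
          {F | ∃ D ∈ prev, (e.1, !e.2.1) ∈ D ∧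
            ∃ C ∈ 𝒞, restrictedIsUnit (prefixAssign t (k - 1)) C (e.1, e.2.1) ∧
              F = resolve e.1 C D}

def CsetDown (𝒞 : Set Clause) (t : Trail) : ℕ → Set Clause
  | 0 => {D ∈ 𝒞 | Clause.falsified (Trail.assign t) D}
  | m + 1 => stepSet 𝒞 t (t.length - m) (CsetDown 𝒞 t m)
def ResStep (ok : Clause → Clause → Var → Prop) (prev : List Clause) (C : Clause) : Prop :=
  ∃ E ∈ prev, ∃ F ∈ prev, ∃ (x : Var) (a : Bool),
    (x, a) ∈ E ∧ (x, !a) ∈ F ∧ C = resolve x E F ∧ ok E F x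

def IsDeriv (τ : Set Clause) (ok : Clause → Clause → Var → Prop) (L : List Clause) : Prop :=
  ∀ i : Fin L.length, L.get i ∈ τ ∨ ResStep ok (L.take i.1) (L.get i)

def okHalf (π : Var → ℕ) (E F : Clause) (x : Var) : Prop :=
  (∀ y ∈ Clause.vars E, y ≠ x → π y < π x) ∨ (∀ y ∈ Clause.vars F, y ≠ x → π y < π x)

/-- The trail respects the ordered decision strategy π-D: every decision is made on
the π-smallest variable unassigned at that point. -/
def RespectsOrder (n : ℕ) (π : Var → ℕ) (t : Trail) : Prop :=
  ∀ (i : ℕ) (h : i < t.length), (t[i]'h).2.2 = true →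
    ∀ y : Var, y < n → y ∉ Trail.varList (t.take i) → π (t[i]'h).1 ≤ π y

def unitCount (t : Trail) : ℕ := (t.filter (fun e => !e.2.2)).length

/-!
By the learning-derivation lemma, a clause learned with the DECISION scheme arises from a
conflict clause `D₀` by resolving with the antecedents `C_v` of distinct propagated variables
`v`. Reorder these resolutions by `π`: going through the propagated variables from the
`π`-largest down, resolve away from `C_v` every variable already processed, using its clause
`C'_w`. Since `w` is `π`-maximal in `C'_w`, each step is `π`-half-ordered, and `v` is again
`π`-maximal in the result `C'_v`: any `π`-larger variable left in it is assigned before `v`,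
which the ordered decision strategy forbids for a decision, and a propagated one would have
been resolved away. Resolving `D₀` against all the `C'_v` in the same way leaves a subclause of
`D`. With `k` propagated variables this takes at most `k` steps per clause, `(k + 1)²` clauses
in all.
-/

lemma mem_resolve {x : Var} {C D : Clause} {l : Lit} :
    l ∈ resolve x C D ↔ (l ∈ C ∨ l ∈ D) ∧ l.1 ≠ x := by
  simp only [resolve, Finset.mem_union, Finset.mem_filter]
  tauto

lemma resolve_filter_notMem {x : Var} {C A : Clause} {V : List Var}
    (hC : ∀ l ∈ C, l.1 ∉ V) :
    resolve x C (A.filter fun l => l.1 ∉ V) = (C ∪ A).filter fun l => l.1 ∉ x :: V := by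
  ext l
  simp only [mem_resolve, Finset.mem_filter, Finset.mem_union, List.mem_cons, not_or]
  constructor
  · rintro ⟨hC' | ⟨hA, hV⟩, hx⟩
    exacts [⟨Or.inl hC', hx, hC l hC'⟩, ⟨Or.inr hA, hx, hV⟩]
  · rintro ⟨hC' | hA, hx, hV⟩
    exacts [⟨Or.inl hC', hx⟩, ⟨Or.inr ⟨hA, hV⟩, hx⟩]

namespace Trail

variable {t : Trail}

lemma eq_of_getElem_fst_eq (hnd : t.varList.Nodup) {i j : ℕ} (hi : i < t.length)
    (hj : j < t.length) (h : t[i].1 = t[j].1) : i = j := by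
  have hi' : i < t.varList.length := by simpa [varList] using hi
  have hj' : j < t.varList.length := by simpa [varList] using hj
  exact (hnd.getElem_inj_iff (hi := hi') (hj := hj')).mp (by simpa [varList] using h)

lemma exists_getElem_of_prefixAssign_eq_some {q : ℕ} {x : Var} {c : Bool}
    (h : prefixAssign t q x = some c) :
    ∃ j, ∃ hj : j < t.length, j < q ∧ t[j].1 = x ∧ t[j].2.1 = c := by
  obtain ⟨e, he, rfl⟩ := Option.map_eq_some_iff.mp h
  obtain ⟨hex, i, hi, rfl, -⟩ := List.find?_eq_some_iff_getElem.mp he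
  simp only [List.length_take, lt_min_iff] at hi
  exact ⟨i, hi.2, hi.1, by simpa using hex, by simp⟩

lemma prefixAssign_getElem (hnd : t.varList.Nodup) {q j : ℕ} (hj : j < t.length)
    (hjq : j < q) : prefixAssign t q t[j].1 = some t[j].2.1 := by
  have hsome : ((t.take q).find? fun e => e.1 == t[j].1).isSome := by
    rw [List.find?_isSome]
    exact ⟨t[j], List.mem_take_iff_getElem.mpr ⟨j, by omega, rfl⟩, by simp⟩
  obtain ⟨e, he⟩ := Option.isSome_iff_exists.mp hsome
  obtain ⟨hex, i, hi, rfl, -⟩ := List.find?_eq_some_iff_getElem.mp he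
  simp only [List.length_take, lt_min_iff] at hi
  have hij : i = j := eq_of_getElem_fst_eq hnd hi.2 hj (by simpa using hex)
  subst hij
  simp [prefixAssign, assign, he]

lemma prefixAssign_length : prefixAssign t t.length = t.assign := by
  simp [prefixAssign]

lemma assign_getElem (hnd : t.varList.Nodup) {j : ℕ} (hj : j < t.length) :
    t.assign t[j].1 = some t[j].2.1 := by
  rw [← prefixAssign_length]
  exact prefixAssign_getElem hnd hj hj

lemma prefixAssign_mono (hnd : t.varList.Nodup) {q q' : ℕ} (hq : q ≤ q') {x : Var} {c : Bool}
    (h : prefixAssign t q x = some c) : prefixAssign t q' x = some c := by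
  obtain ⟨j, hj, hjq, rfl, rfl⟩ := exists_getElem_of_prefixAssign_eq_some h
  exact prefixAssign_getElem hnd hj (by omega)

lemma litFalse_assign (hnd : t.varList.Nodup) {q : ℕ} {l : Lit}
    (h : litFalse (prefixAssign t q) l) : litFalse t.assign l := by
  rw [litFalse, ← prefixAssign_length]
  obtain ⟨j, hj, -, hjl, hjc⟩ := exists_getElem_of_prefixAssign_eq_some h
  exact hjl ▸ hjc ▸ prefixAssign_getElem hnd hj hj

def IsPropagated (t : Trail) (x : Var) : Prop :=
  ∃ j, ∃ hj : j < t.length, t[j].1 = x ∧ t[j].2.2 = false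

end Trail

lemma RespectsOrder.lt_of_decision {n : ℕ} {π : Var → ℕ} {t : Trail} (hro : RespectsOrder n π t)
    (hπ : Function.Injective π) (hnd : t.varList.Nodup) (hn : ∀ e ∈ t, e.1 < n) {j p : ℕ}
    (hp : p < t.length) (hjp : j < p) (hdec : t[j].2.2 = true) : π t[j].1 < π t[p].1 := by
  have hp_new : t[p].1 ∉ Trail.varList (t.take j) := by
    simp only [Trail.varList, List.mem_map, not_exists, not_and]
    intro e he hep
    obtain ⟨i, hi, rfl⟩ := List.mem_take_iff_getElem.mp he
    have := Trail.eq_of_getElem_fst_eq hnd _ hp hep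
    omega
  refine (hro j _ hdec _ (hn _ (List.getElem_mem _)) hp_new).lt_of_ne fun h => ?_
  have := Trail.eq_of_getElem_fst_eq hnd _ hp (hπ h)
  omega

section Derivation

variable {τ : Set Clause} {ok : Clause → Clause → Var → Prop}

lemma isDeriv_nil : IsDeriv τ ok [] := fun i => i.elim0

lemma IsDeriv.snoc {L : List Clause} {C : Clause} (hL : IsDeriv τ ok L)
    (hC : C ∈ τ ∨ ResStep ok L C) : IsDeriv τ ok (L ++ [C]) := by
  intro ⟨i, hi⟩
  rw [List.length_append, List.length_singleton] at hi
  rcases Nat.lt_succ_iff_lt_or_eq.mp hi with hi | rfl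
  · simpa [List.getElem_append_left hi, List.take_append_of_le_length hi.le] using hL ⟨i, hi⟩
  · simpa using hC

end Derivation

def eliminate : List (Var × Clause) → Clause → Clause × List Clause
  | [], G => (G, [])
  | (w, R) :: acc, G =>
    if w ∈ G.vars then
      ((eliminate acc (resolve w R G)).1, resolve w R G :: (eliminate acc (resolve w R G)).2)
    else eliminate acc G

section Eliminate

variable {acc : List (Var × Clause)} {G : Clause}

lemma length_eliminate_le (acc : List (Var × Clause)) (G : Clause) :
    (eliminate acc G).2.length ≤ acc.length := by
  induction acc generalizing G with
  | nil => simp [eliminate]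
  | cons wR acc ih =>
    obtain ⟨w, R⟩ := wR
    unfold eliminate
    split_ifs
    · simpa using ih _
    · exact (ih G).trans (by simp)

lemma mem_eliminate_of_mem {l : Lit} (hl : l ∈ G) (hacc : l.1 ∉ acc.map Prod.fst) :
    l ∈ (eliminate acc G).1 := by
  induction acc generalizing G with
  | nil => simpa [eliminate]
  | cons wR acc ih =>
    obtain ⟨w, R⟩ := wR
    simp only [List.map_cons, List.mem_cons, not_or] at hacc
    unfold eliminate
    split_ifs
    · exact ih (mem_resolve.mpr ⟨Or.inr hl, hacc.1⟩) hacc.2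
    · exact ih hl hacc.2

lemma eliminate_induction (P : Lit → Prop) (hG : ∀ l ∈ G, P l)
    (hacc : ∀ wR ∈ acc, (∃ c, P (wR.1, c)) → ∀ l ∈ wR.2, l.1 ≠ wR.1 → P l) :
    ∀ l ∈ (eliminate acc G).1, P l := by
  induction acc generalizing G with
  | nil => exact hG
  | cons wR acc ih =>
    obtain ⟨w, R⟩ := wR
    have hacc' := fun vR hvR => hacc vR (List.mem_cons_of_mem _ hvR)
    unfold eliminate
    split_ifs with hw
    · refine ih (fun l hl => ?_) hacc'
      obtain ⟨hlR | hlG, hlw⟩ := mem_resolve.mp hl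
      · obtain ⟨⟨w', c⟩, hwc, hw'⟩ := Finset.mem_image.mp hw
        obtain rfl : w' = w := hw'
        exact hacc (w', R) List.mem_cons_self ⟨c, hG _ hwc⟩ l hlR hlw
      · exact hG l hlG
    · exact ih hG hacc'

lemma eliminate_subset {U : Clause} (hG : G ⊆ U) (hacc : ∀ wR ∈ acc, wR.2 ⊆ U) :
    (eliminate acc G).1 ⊆ U :=
  eliminate_induction (· ∈ U) hG fun wR hwR _ _ hl _ => hacc wR hwR hl

/-- The paper's clauses `C'_ν`, in which the resolved variable appears `π`-maximally. -/
def PivotMaximal (π : Var → ℕ) (wR : Var × Clause) : Prop :=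
  ∀ l ∈ wR.2, l.1 ≠ wR.1 → π l.1 < π wR.1

/-- Pivots are eliminated in `π`-decreasing order, so a later resolvent never reintroduces
an earlier pivot. -/
lemma notMem_map_fst_of_mem_eliminate {π : Var → ℕ}
    (hsorted : acc.Pairwise fun a b => π b.1 < π a.1) (hmax : ∀ wR ∈ acc, PivotMaximal π wR)
    {l : Lit} (hl : l ∈ (eliminate acc G).1) : l.1 ∉ acc.map Prod.fst := by
  induction acc generalizing G with
  | nil => simp
  | cons wR acc ih =>
    obtain ⟨w, R⟩ := wR
    obtain ⟨hw_gt, hsorted⟩ := List.pairwise_cons.mp hsorted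
    have hmax' := fun vR hvR => hmax vR (List.mem_cons_of_mem _ hvR)
    have hkeep : ∀ G', w ∉ G'.vars → ∀ l ∈ (eliminate acc G').1, l.1 ≠ w := by
      refine fun G' hG' => eliminate_induction _ (fun l hl hlw => hG' ?_) ?_
      · exact Finset.mem_image.mpr ⟨l, hl, hlw⟩
      · intro vR hvR _ l' hl' hlv hlw
        exact (hw_gt vR hvR).not_gt (hlw ▸ hmax' vR hvR l' hl' hlv)
    simp only [List.map_cons, List.mem_cons, not_or]
    unfold eliminate at hl
    split_ifs at hl with hw
    · refine ⟨hkeep _ ?_ l hl, ih hsorted hmax' hl⟩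
      intro hw'
      obtain ⟨l', hl', hl'w⟩ := Finset.mem_image.mp hw'
      exact (mem_resolve.mp hl').2 hl'w
    · exact ⟨hkeep G hw l hl, ih hsorted hmax' hl⟩

end Eliminate

def IsOrderedReason (π : Var → ℕ) (t : Trail) (wR : Var × Clause) : Prop :=
  PivotMaximal π wR ∧ ∃ p, ∃ hp : p < t.length, t[p].1 = wR.1 ∧ (wR.1, t[p].2.1) ∈ wR.2 ∧
    ∀ l ∈ wR.2, l.1 ≠ wR.1 → litFalse (prefixAssign t p) l

section OrderedReason

variable {π : Var → ℕ} {t : Trail} {τ : Set Clause}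

lemma IsOrderedReason.litFalse_of_prefixAssign_eq_some (hnd : t.varList.Nodup) {wR : Var × Clause}
    (hR : IsOrderedReason π t wR) {q : ℕ} {c : Bool} (hw : prefixAssign t q wR.1 = some c)
    {l : Lit} (hl : l ∈ wR.2) (hlw : l.1 ≠ wR.1) : litFalse (prefixAssign t q) l := by
  obtain ⟨-, p, hp, hpw, -, hside⟩ := hR
  obtain ⟨j, hj, hjq, hjw, -⟩ := Trail.exists_getElem_of_prefixAssign_eq_some hw
  have hjp : j = p := Trail.eq_of_getElem_fst_eq hnd hj hp (hjw.trans hpw.symm)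
  exact Trail.prefixAssign_mono hnd (by omega) (hside l hl hlw)

lemma isDeriv_eliminate (hnd : t.varList.Nodup) {acc : List (Var × Clause)} {G : Clause}
    {L : List Clause} (hL : IsDeriv τ (okHalf π) L) (hGL : G ∈ L)
    (hacc : ∀ wR ∈ acc, IsOrderedReason π t wR ∧ wR.2 ∈ L)
    (hG : ∀ l ∈ G, l.1 ∈ acc.map Prod.fst → litFalse t.assign l) :
    IsDeriv τ (okHalf π) (L ++ (eliminate acc G).2) ∧
      (eliminate acc G).1 ∈ L ++ (eliminate acc G).2 := by
  induction acc generalizing G L with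
  | nil => simpa [eliminate] using ⟨hL, hGL⟩
  | cons wR acc ih =>
    obtain ⟨w, R⟩ := wR
    have hacc' := fun vR hvR => hacc vR (List.mem_cons_of_mem _ hvR)
    unfold eliminate
    split_ifs with hw
    · obtain ⟨⟨hmax, p, hp, hpw, hwR, hside⟩, hRL⟩ := hacc (w, R) List.mem_cons_self
      obtain ⟨⟨w', c⟩, hwc, rfl⟩ := Finset.mem_image.mp hw
      have hc : c = !t[p].2.1 := by
        have h := hG _ hwc (by simp)
        rw [litFalse, ← hpw, Trail.assign_getElem hnd hp, Option.some_inj] at h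
        simp [h]
      have hstep : ResStep (okHalf π) L (resolve w' R G) := by
        refine ⟨R, hRL, G, hGL, w', t[p].2.1, hwR, hc ▸ hwc, rfl, Or.inl ?_⟩
        intro y hy hyw
        obtain ⟨l, hl, rfl⟩ := Finset.mem_image.mp hy
        exact hmax l hl hyw
      have hG' : ∀ l ∈ resolve w' R G, l.1 ∈ acc.map Prod.fst → litFalse t.assign l := by
        intro l hl hlacc
        obtain ⟨hlR | hlG, hlw⟩ := mem_resolve.mp hl
        · exact Trail.litFalse_assign hnd (hside l hlR hlw)
        · exact hG l hlG (List.mem_cons_of_mem _ hlacc)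
      have := ih (hL.snoc (Or.inr hstep)) (by simp)
        (fun vR hvR => ⟨(hacc' vR hvR).1, by simp [(hacc' vR hvR).2]⟩) hG'
      simpa using this
    · exact ih hL hGL (fun vR hvR => hacc' vR hvR)
        (fun l hl hlacc => hG l hl (List.mem_cons_of_mem _ hlacc))

end OrderedReason

def IsAntecedentAt (𝒞 : Set Clause) (t : Trail) (p : ℕ) (vC : Var × Clause) : Prop :=
  ∃ hp : p < t.length, t[p].1 = vC.1 ∧ t[p].2.2 = false ∧ vC.2 ∈ 𝒞 ∧
    restrictedIsUnit (prefixAssign t p) vC.2 (vC.1, t[p].2.1)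

/-- Meant for `s` in `π`-increasing order of its variables: the result lists their ordered
reasons from the `π`-largest variable downwards. -/
def pivotClauses : List (Var × Clause) → List (Var × Clause)
  | [] => []
  | (v, C) :: s => pivotClauses s ++ [(v, (eliminate (pivotClauses s) C).1)]

def pivotDerivation : List (Var × Clause) → List Clause
  | [] => []
  | (_, C) :: s => pivotDerivation s ++ C :: (eliminate (pivotClauses s) C).2

lemma map_fst_pivotClauses (s : List (Var × Clause)) :
    (pivotClauses s).map Prod.fst = (s.map Prod.fst).reverse := by
  induction s with
  | nil => rfl
  | cons vC s ih => simp [pivotClauses, ih]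

lemma pairwise_pivotClauses {π : Var → ℕ} {s : List (Var × Clause)}
    (hs : s.Pairwise fun a b => π a.1 < π b.1) :
    (pivotClauses s).Pairwise fun a b => π b.1 < π a.1 := by
  rw [← List.pairwise_map (R := fun x y => π y < π x), map_fst_pivotClauses,
    List.pairwise_reverse, List.pairwise_map]
  exact hs

lemma length_pivotDerivation_le (s : List (Var × Clause)) :
    (pivotDerivation s).length ≤ s.length ^ 2 := by
  induction s with
  | nil => simp [pivotDerivation]
  | cons vC s ih =>
    have hacc : (pivotClauses s).length = s.length := by
      simpa using congrArg List.length (map_fst_pivotClauses s)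
    have := length_eliminate_le (pivotClauses s) vC.2
    simp only [pivotDerivation, List.length_append, List.length_cons]
    nlinarith

section Ordered

variable {n : ℕ} {π : Var → ℕ} {𝒞 : Set Clause} {t : Trail} {U : Clause}

/-- A side literal `π`-above `v` would be assigned before `v`: as a decision it would contradict
the ordered decision strategy, and as a propagation it has already been eliminated. -/
lemma isOrderedReason_eliminate (hπ : Function.Injective π) (hnd : t.varList.Nodup)
    (hn : ∀ e ∈ t, e.1 < n) (hro : RespectsOrder n π t) {acc : List (Var × Clause)}
    (hsorted : acc.Pairwise fun a b => π b.1 < π a.1)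
    (hacc : ∀ wR ∈ acc, IsOrderedReason π t wR ∧ wR.2 ⊆ U) {p : ℕ} {v : Var} {C : Clause}
    (hant : IsAntecedentAt 𝒞 t p (v, C)) (hCU : C ⊆ U) (hv : v ∉ acc.map Prod.fst)
    (hup : ∀ l ∈ U, t.IsPropagated l.1 → π v < π l.1 → l.1 ∈ acc.map Prod.fst) :
    IsOrderedReason π t (v, (eliminate acc C).1) := by
  obtain ⟨hp, hpv, -, -, hunit⟩ := hant
  have hside : ∀ l ∈ (eliminate acc C).1, l.1 = v ∨ litFalse (prefixAssign t p) l := by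
    refine eliminate_induction _ (fun l hl => ?_) ?_
    · by_cases hlv : l.1 = v
      · exact Or.inl hlv
      · exact Or.inr (hunit.2.2 l hl fun h => hlv (h ▸ rfl))
    · rintro wR hwR ⟨c, hc | hc⟩ l hl hlw
      · exact absurd (hc ▸ List.mem_map_of_mem hwR) hv
      · exact Or.inr ((hacc wR hwR).1.litFalse_of_prefixAssign_eq_some hnd hc hl hlw)
  have hfalse := fun l hl hlv => (hside l hl).resolve_left hlv
  refine ⟨fun l hl hlv => ?_, p, hp, hpv, mem_eliminate_of_mem hunit.1 hv, hfalse⟩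
  obtain ⟨j, hj, hjp, hjl, -⟩ :=
    Trail.exists_getElem_of_prefixAssign_eq_some (hfalse l hl hlv)
  by_contra hle
  have hvl : π v < π l.1 := (not_lt.mp hle).lt_of_ne fun h => hlv (hπ h).symm
  cases hdec : t[j].2.2
  · have hlU := eliminate_subset hCU (fun wR hwR => (hacc wR hwR).2) hl
    exact notMem_map_fst_of_mem_eliminate hsorted (fun wR hwR => (hacc wR hwR).1.1) hl
      (hup l hlU ⟨j, hj, hjl, hdec⟩ hvl)
  · have := hro.lt_of_decision hπ hnd hn hp hjp hdec
    rw [hjl, hpv] at this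
    exact hle this

lemma isDeriv_pivotDerivation (hπ : Function.Injective π) (hnd : t.varList.Nodup)
    (hn : ∀ e ∈ t, e.1 < n) (hro : RespectsOrder n π t) {s : List (Var × Clause)}
    (hs : s.Pairwise fun a b => π a.1 < π b.1)
    (hant : ∀ vC ∈ s, (∃ p, IsAntecedentAt 𝒞 t p vC) ∧ vC.2 ⊆ U)
    (hup : ∀ l ∈ U, t.IsPropagated l.1 → ∀ vC ∈ s, π vC.1 < π l.1 → l.1 ∈ s.map Prod.fst) :
    IsDeriv 𝒞 (okHalf π) (pivotDerivation s) ∧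
      ∀ wR ∈ pivotClauses s, (IsOrderedReason π t wR ∧ wR.2 ⊆ U) ∧ wR.2 ∈ pivotDerivation s := by
  induction s with
  | nil => exact ⟨isDeriv_nil, by simp [pivotClauses]⟩
  | cons vC s ih =>
    obtain ⟨v, C⟩ := vC
    obtain ⟨hv_lt, hs⟩ := List.pairwise_cons.mp hs
    obtain ⟨⟨p, hvC⟩, hCU⟩ := hant (v, C) List.mem_cons_self
    have hup_v : ∀ l ∈ U, t.IsPropagated l.1 → π v < π l.1 → l.1 ∈ s.map Prod.fst := by
      intro l hl hprop hvl
      obtain h | h := List.mem_cons.mp (hup l hl hprop (v, C) List.mem_cons_self hvl)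
      · exact absurd (h ▸ hvl) (lt_irrefl _)
      · exact h
    obtain ⟨hD, hacc⟩ := ih hs (fun vC hvC => hant vC (List.mem_cons_of_mem _ hvC))
      fun l hl hprop vC' hvC' hlt => hup_v l hl hprop ((hv_lt vC' hvC').trans hlt)
    have hv : v ∉ (pivotClauses s).map Prod.fst := by
      rw [map_fst_pivotClauses, List.mem_reverse, List.mem_map]
      rintro ⟨vC', hvC', rfl⟩
      exact lt_irrefl _ (hv_lt vC' hvC')
    have hR := isOrderedReason_eliminate hπ hnd hn hro (pairwise_pivotClauses hs)
      (fun wR hwR => (hacc wR hwR).1) hvC hCU hv fun l hl hprop hvl => by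
        rw [map_fst_pivotClauses, List.mem_reverse]
        exact hup_v l hl hprop hvl
    obtain ⟨hp, -, -, hC𝒞, hunit⟩ := hvC
    obtain ⟨hD', hRD⟩ := isDeriv_eliminate hnd (hD.snoc (Or.inl hC𝒞)) (by simp)
      (fun wR hwR => ⟨(hacc wR hwR).1.1, by simp [(hacc wR hwR).2]⟩)
      fun l hl hlacc => Trail.litFalse_assign hnd
        (hunit.2.2 l hl fun h => hv (by simpa [h] using hlacc))
    refine ⟨by simpa [pivotDerivation] using hD', fun wR hwR => ?_⟩
    rw [pivotClauses, List.mem_append, List.mem_singleton] at hwR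
    obtain hwR | rfl := hwR
    · exact ⟨(hacc wR hwR).1, by simp [pivotDerivation, (hacc wR hwR).2]⟩
    · refine ⟨⟨hR, eliminate_subset hCU fun wR hwR => (hacc wR hwR).1.2⟩, ?_⟩
      simpa [pivotDerivation] using hRD

end Ordered

section Learned

variable {𝒞 : Set Clause} {t : Trail}

lemma mem_csetDown_succ {m p : ℕ} (hp : p + m + 1 = t.length) {D : Clause}
    (hD : D ∈ CsetDown 𝒞 t (m + 1)) :
    (D ∈ CsetDown 𝒞 t m ∧ (t[p].2.2 = false → (t[p].1, !t[p].2.1) ∉ D)) ∨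
      (t[p].2.2 = false ∧ ∃ D' ∈ CsetDown 𝒞 t m, ∃ C ∈ 𝒞,
        restrictedIsUnit (prefixAssign t p) C (t[p].1, t[p].2.1) ∧ D = resolve t[p].1 C D') := by
  simp only [CsetDown, stepSet] at hD
  rw [show t.length - m - 1 = p by omega, List.getElem?_eq_getElem (by omega)] at hD
  dsimp only at hD
  split_ifs at hD with hdec
  · exact Or.inl ⟨hD, fun h => absurd hdec (by simp [h])⟩
  · obtain ⟨hD, hnot⟩ | ⟨D', hD', -, C, hC, hunit, rfl⟩ := hD
    · exact Or.inl ⟨hD, fun _ => hnot⟩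
    · exact Or.inr ⟨by simpa using hdec, D', hD', C, hC, hunit, rfl⟩

lemma falsified_of_mem_csetDown (hnd : t.varList.Nodup) {m : ℕ} (hm : m ≤ t.length)
    {D : Clause} (hD : D ∈ CsetDown 𝒞 t m) : D.falsified t.assign := by
  induction m generalizing D with
  | zero => exact hD.2
  | succ m ih =>
    obtain ⟨hD, -⟩ | ⟨-, D', hD', C, -, hunit, rfl⟩ :=
      mem_csetDown_succ (p := t.length - m - 1) (by omega) hD
    · exact ih (by omega) hD
    · intro l hl
      obtain ⟨hlC | hlD, hly⟩ := mem_resolve.mp hl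
      · exact Trail.litFalse_assign hnd (hunit.2.2 l hlC fun h => hly (h ▸ rfl))
      · exact ih (by omega) hD' l hlD

lemma notMem_vars_of_mem_csetDown (hnd : t.varList.Nodup) {m : ℕ} (hm : m ≤ t.length)
    {D : Clause} (hD : D ∈ CsetDown 𝒞 t m) {j : ℕ} (hj : j < t.length) (hjm : t.length ≤ j + m)
    (hdec : t[j].2.2 = false) : t[j].1 ∉ D.vars := by
  induction m generalizing D with
  | zero => omega
  | succ m ih =>
    set p := t.length - m - 1
    rintro hmem
    obtain ⟨l, hl, hlj⟩ := Finset.mem_image.mp hmem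
    obtain ⟨hD, hnot⟩ | ⟨-, D', hD', C, -, hunit, rfl⟩ :=
      mem_csetDown_succ (p := p) (by omega) hD
    · obtain hjp | rfl : p < j ∨ j = p := by omega
      · exact ih (by omega) hD (by omega) hmem
      · have h := falsified_of_mem_csetDown hnd (by omega) hD l hl
        rw [litFalse, hlj, Trail.assign_getElem hnd hj, Option.some_inj] at h
        exact hnot hdec (by rw [← hlj, h, Bool.not_not]; exact hl)
    · obtain ⟨hlC | hlD, hly⟩ := mem_resolve.mp hl
      · obtain ⟨i, hi, hip, hil, -⟩ := Trail.exists_getElem_of_prefixAssign_eq_some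
          (hunit.2.2 l hlC fun h => hly (h ▸ rfl))
        have := Trail.eq_of_getElem_fst_eq hnd hi hj (hil.trans hlj)
        have : j ≠ p := fun h => hly (by subst h; exact hlj)
        omega
      · have : j ≠ p := fun h => hly (by subst h; exact hlj)
        exact ih (by omega) hD' (by omega) (Finset.mem_image.mpr ⟨l, hlD, hlj⟩)

lemma getElem_fst_notMem_of_lt (hnd : t.varList.Nodup) {ρ : List (Var × Clause)} {q : ℕ}
    (hρ : ∀ vC ∈ ρ, ∃ p, q ≤ p ∧ IsAntecedentAt 𝒞 t p vC) {i : ℕ} (hi : i < t.length)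
    (hiq : i < q) : t[i].1 ∉ ρ.map Prod.fst := by
  rw [List.mem_map]
  rintro ⟨vC, hvC, hv⟩
  obtain ⟨p, hqp, hp, hpv, -⟩ := hρ vC hvC
  have := Trail.eq_of_getElem_fst_eq hnd hi hp (hv.symm.trans hpv.symm)
  omega

/-- The learning-derivation lemma, with `D = C_{k+1} ∘ ⋯ ∘ C₁` written as the set of all
literals of the premises minus the resolved variables. -/
lemma exists_antecedents_of_mem_csetDown (hnd : t.varList.Nodup) {m : ℕ} (hm : m ≤ t.length)
    {D : Clause} (hD : D ∈ CsetDown 𝒞 t m) :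
    ∃ (D₀ : Clause) (ρ : List (Var × Clause)), D₀ ∈ CsetDown 𝒞 t 0 ∧
      (∀ vC ∈ ρ, ∃ p, t.length ≤ p + m ∧ IsAntecedentAt 𝒞 t p vC) ∧ (ρ.map Prod.fst).Nodup ∧
      D = (D₀ ∪ ρ.toFinset.biUnion Prod.snd).filter fun l => l.1 ∉ ρ.map Prod.fst := by
  induction m generalizing D with
  | zero => exact ⟨D, [], hD, by simp, by simp, by ext; simp⟩
  | succ m ih =>
    set p := t.length - m - 1
    obtain ⟨hD, -⟩ | ⟨hdec, D', hD', C, hC, hunit, rfl⟩ :=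
      mem_csetDown_succ (p := p) (by omega) hD
    · obtain ⟨D₀, ρ, hD₀, hρ, hρnd, rfl⟩ := ih (by omega) hD
      exact ⟨D₀, ρ, hD₀, fun vC hvC => (hρ vC hvC).imp fun _ h => ⟨by omega, h.2⟩, hρnd, rfl⟩
    obtain ⟨D₀, ρ, hD₀, hρ, hρnd, rfl⟩ := ih (by omega) hD'
    have hρ' : ∀ vC ∈ ρ, ∃ p', p + 1 ≤ p' ∧ IsAntecedentAt 𝒞 t p' vC :=
      fun vC hvC => (hρ vC hvC).imp fun _ h => ⟨by omega, h.2⟩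
    have hy : t[p].1 ∉ ρ.map Prod.fst := getElem_fst_notMem_of_lt hnd hρ' _ (by omega)
    have hCρ : ∀ l ∈ C, l.1 ∉ ρ.map Prod.fst := by
      intro l hl
      by_cases hly : l = (t[p].1, t[p].2.1)
      · exact hly ▸ hy
      · obtain ⟨i, hi, hip, hil, -⟩ :=
          Trail.exists_getElem_of_prefixAssign_eq_some (hunit.2.2 l hl hly)
        exact hil ▸ getElem_fst_notMem_of_lt hnd hρ' hi (by omega)
    refine ⟨D₀, (t[p].1, C) :: ρ, hD₀, ?_, List.nodup_cons.mpr ⟨hy, hρnd⟩, ?_⟩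
    · intro vC hvC
      obtain rfl | hvC := List.mem_cons.mp hvC
      · exact ⟨p, by omega, by omega, rfl, hdec, hC, hunit⟩
      · exact (hρ vC hvC).imp fun _ h => ⟨by omega, h.2⟩
    · rw [resolve_filter_notMem hCρ]
      ext l
      simp only [Finset.mem_filter, Finset.mem_union, List.toFinset_cons, Finset.biUnion_insert,
        List.map_cons]
      tauto

end Learned

lemma List.exists_perm_pairwise_lt_of_nodup_map {α : Type*} (f : α → ℕ) (l : List α)
    (hl : (l.map f).Nodup) : ∃ s : List α, s.Perm l ∧ s.Pairwise fun a b => f a < f b := by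
  have hperm := l.mergeSort_perm fun a b => f a ≤ f b
  have hle := List.pairwise_mergeSort (le := fun a b => f a ≤ f b)
    (fun _ _ _ h₁ h₂ => by simp only [decide_eq_true_eq] at *; omega)
    (fun a b => by simpa using le_total _ _) l
  have hne := List.pairwise_map.mp ((hperm.map f).nodup_iff.mpr hl)
  exact ⟨_, hperm, (hle.and hne).imp fun ⟨h₁, h₂⟩ => (by simpa using h₁ : _ ≤ _).lt_of_ne h₂⟩

section Simulation

variable {n : ℕ} {π : Var → ℕ} {𝒞 : Set Clause} {t : Trail}

lemma length_le_unitCount {ρ : List (Var × Clause)} (hρnd : (ρ.map Prod.fst).Nodup)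
    (hρ : ∀ vC ∈ ρ, ∃ p, IsAntecedentAt 𝒞 t p vC) : ρ.length ≤ unitCount t := by
  have hsub : ρ.map Prod.fst ⊆ (t.filter fun e => !e.2.2).map Prod.fst := by
    intro x hx
    obtain ⟨vC, hvC, rfl⟩ := List.mem_map.mp hx
    obtain ⟨p, hp, hpv, hdec, -⟩ := hρ vC hvC
    exact List.mem_map.mpr ⟨t[p], List.mem_filter.mpr ⟨List.getElem_mem _, by simp [hdec]⟩, hpv⟩
  simpa [unitCount] using (hρnd.subperm hsub).length_le

lemma exists_isDeriv_okHalf_subset (hπ : Function.Injective π) (hnd : t.varList.Nodup)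
    (hn : ∀ e ∈ t, e.1 < n) (hro : RespectsOrder n π t) {D₀ : Clause}
    {ρ : List (Var × Clause)} (hD₀ : D₀ ∈ CsetDown 𝒞 t 0)
    (hρ : ∀ vC ∈ ρ, ∃ p, IsAntecedentAt 𝒞 t p vC) (hρnd : (ρ.map Prod.fst).Nodup)
    (hprop : ∀ l ∈ D₀ ∪ ρ.toFinset.biUnion Prod.snd, t.IsPropagated l.1 → l.1 ∈ ρ.map Prod.fst) :
    ∃ (L : List Clause) (D' : Clause), IsDeriv 𝒞 (okHalf π) L ∧ D' ∈ L ∧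
      D' ⊆ (D₀ ∪ ρ.toFinset.biUnion Prod.snd).filter (fun l => l.1 ∉ ρ.map Prod.fst) ∧
      L.length ≤ (ρ.length + 1) ^ 2 := by
  obtain ⟨s, hperm, hs⟩ := List.exists_perm_pairwise_lt_of_nodup_map (π ∘ Prod.fst) ρ
    (by simpa [← List.map_map] using hρnd.map hπ)
  have hvars : ∀ x, x ∈ s.map Prod.fst ↔ x ∈ ρ.map Prod.fst := fun x => (hperm.map _).mem_iff
  obtain ⟨hL, hacc⟩ :=
    isDeriv_pivotDerivation (U := D₀ ∪ ρ.toFinset.biUnion Prod.snd) hπ hnd hn hro hs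
    (fun vC hvC => ⟨hρ vC (hperm.mem_iff.mp hvC), fun l hl => by
      simpa using Or.inr ⟨vC.1, vC.2, hperm.mem_iff.mp hvC, hl⟩⟩)
    fun l hl hl_prop _ _ _ => (hvars _).mpr (hprop l hl hl_prop)
  obtain ⟨hL', hD'⟩ := isDeriv_eliminate (acc := pivotClauses s) hnd
    (hL.snoc (Or.inl hD₀.1)) (by simp)
    (fun wR hwR => ⟨(hacc wR hwR).1.1, by simp [(hacc wR hwR).2]⟩) fun l hl _ => hD₀.2 l hl
  refine ⟨_, _, hL', hD', fun l hl => Finset.mem_filter.mpr ⟨?_, ?_⟩, ?_⟩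
  · exact eliminate_subset Finset.subset_union_left (fun wR hwR => (hacc wR hwR).1.2) hl
  · have := notMem_map_fst_of_mem_eliminate (pairwise_pivotClauses hs)
      (fun wR hwR => (hacc wR hwR).1.1.1) hl
    rwa [map_fst_pivotClauses, List.mem_reverse, hvars] at this
  · have hacc_len : (pivotClauses s).length = ρ.length := by
      simpa [hperm.length_eq] using congrArg List.length (map_fst_pivotClauses s)
    have h₁ := hperm.length_eq ▸ length_pivotDerivation_le s
    have h₂ := hacc_len ▸ length_eliminate_le (pivotClauses s) D₀
    simp only [List.length_append, List.length_singleton]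
    nlinarith

end Simulation

theorem stmt_11 :
    ∃ c : ℕ, ∀ (n : ℕ) (π : Var → ℕ), Function.Injective π →
      ∀ (𝒞 : Set Clause) (t : Trail), (Trail.varList t).Nodup →
        (∀ e ∈ t, e.1 < n) → RespectsOrder n π t →
        -- D is learnable with the DECISION-L scheme, i.e. D ∈ C₁((𝒞, t))
        ∀ D ∈ CsetDown 𝒞 t t.length,
          ∃ (L : List Clause) (D' : Clause),
            IsDeriv 𝒞 (okHalf π) L ∧ D' ∈ L ∧ D' ⊆ D ∧
            L.length ≤ c * (unitCount t + 1) ^ 2 := by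
  refine ⟨1, fun n π hπ 𝒞 t hnd hn hro D hD => ?_⟩
  obtain ⟨D₀, ρ, hD₀, hρ, hρnd, rfl⟩ := exists_antecedents_of_mem_csetDown hnd le_rfl hD
  have hρ' : ∀ vC ∈ ρ, ∃ p, IsAntecedentAt 𝒞 t p vC :=
    fun vC hvC => (hρ vC hvC).imp fun _ => And.right
  have hprop : ∀ l ∈ D₀ ∪ ρ.toFinset.biUnion Prod.snd, t.IsPropagated l.1 →
      l.1 ∈ ρ.map Prod.fst := by
    rintro l hl ⟨j, hj, hjl, hdec⟩
    by_contra hlρ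
    exact notMem_vars_of_mem_csetDown hnd le_rfl hD hj (by omega) hdec
      (Finset.mem_image.mpr ⟨l, Finset.mem_filter.mpr ⟨hl, hlρ⟩, hjl.symm⟩)
  obtain ⟨L, D', hL, hD'L, hD'D, hlen⟩ :=
    exists_isDeriv_okHalf_subset hπ hnd hn hro hD₀ hρ' hρnd hprop
  refine ⟨L, D', hL, hD'L, hD'D, hlen.trans ?_⟩
  have := length_le_unitCount hρnd hρ'
  rw [one_mul]
  gcongr
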